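/- arXiv:1811.04059 — 2 statements merged into one kernel-verified Lean document; each statement's English description precedes it below -/
import Mathlib

section
/- Let G be a simple graph on vertex set {v_1,...,v_n} and let i ≠ j be indices. Define the shift operator S_{i,j} which replaces each edge e containing v_j but not v_i by (e \ {v_j}) ∪ {v_i} whenever the resulting edge is not already in G, and leaves all other edges unchanged. Then the number of triangles (3-cliques) in G is at most the number of triangles in S_{i,j}(G). -/
/-- The set of triangles (3-cliques) of a simple graph given by its edge set `E`,
a finite set of 2-element subsets of the vertex set `V`. -/
def triangleFinset {V : Type*} [Fintype V] [DecidableEq V]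
    (E : Finset (Finset V)) : Finset (Finset V) :=
  (Finset.univ.powersetCard 3).filter fun t => ∀ e ∈ t.powersetCard 2, e ∈ E

/-- The shift operator `S_{i,j}` on an edge `e`: if `e` contains `v_j` but not `v_i`
and the shifted pair is not already an edge, replace `v_j` by `v_i`; otherwise leave
`e` unchanged. -/
def shiftEdge {V : Type*} [DecidableEq V] (E : Finset (Finset V)) (i j : V)
    (e : Finset V) : Finset V :=
  if j ∈ e ∧ i ∉ e ∧ insert i (e.erase j) ∉ E then insert i (e.erase j) else e

/-- The shifted graph `S_{i,j}(G)`: the image of the edge set under `shiftEdge`. -/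
def shiftGraph {V : Type*} [DecidableEq V] (E : Finset (Finset V)) (i j : V) :
    Finset (Finset V) :=
  E.image (shiftEdge E i j)

/-- The degree of a vertex: the number of edges containing it. -/
def degE {V : Type*} [DecidableEq V] (E : Finset (Finset V)) (u : V) : ℕ :=
  (E.filter fun e => u ∈ e).card

section Aux

variable {V : Type*} [DecidableEq V]

lemma mem_shift_of_not_moved (E : Finset (Finset V)) (i j : V) {e : Finset V}
    (he : e ∈ E) (h : ¬(j ∈ e ∧ i ∉ e ∧ insert i (e.erase j) ∉ E)) :
    e ∈ shiftGraph E i j := by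
  refine Finset.mem_image.2 ⟨e, he, ?_⟩
  rw [shiftEdge, if_neg h]

lemma mem_shift_of_moved (E : Finset (Finset V)) (i j : V) {e : Finset V}
    (he : e ∈ E) (h : j ∈ e ∧ i ∉ e ∧ insert i (e.erase j) ∉ E) :
    insert i (e.erase j) ∈ shiftGraph E i j := by
  refine Finset.mem_image.2 ⟨e, he, ?_⟩
  rw [shiftEdge, if_pos h]

lemma pair_subset_triple {a b c : V} {e : Finset V}
    (he : e ⊆ ({a, b, c} : Finset V)) (hc : e.card = 2) :
    e = {a, b} ∨ e = {a, c} ∨ e = {b, c} := by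
  obtain ⟨x, y, hxy, rfl⟩ := Finset.card_eq_two.1 hc
  have hx := he (Finset.mem_insert_self x {y})
  have hy := he (Finset.mem_insert_of_mem (Finset.mem_singleton_self y))
  simp only [Finset.mem_insert, Finset.mem_singleton] at hx hy
  rcases hx with rfl | rfl | rfl <;> rcases hy with rfl | rfl | rfl <;>
    first
      | exact absurd rfl hxy
      | (exact Or.inl rfl)
      | (exact Or.inr (Or.inl rfl))
      | (exact Or.inr (Or.inr rfl))
      | (exact Or.inl (Finset.pair_comm _ _))
      | (exact Or.inr (Or.inl (Finset.pair_comm _ _)))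
      | (exact Or.inr (Or.inr (Finset.pair_comm _ _)))

variable [Fintype V]

lemma mem_triangleFinset (E : Finset (Finset V)) (t : Finset V) :
    t ∈ triangleFinset E ↔ t.card = 3 ∧ ∀ e ⊆ t, e.card = 2 → e ∈ E := by
  simp only [triangleFinset, Finset.mem_filter, Finset.mem_powersetCard,
    Finset.subset_univ, true_and]
  tauto

lemma triple_mem_triangleFinset {E : Finset (Finset V)} {a b c : V}
    (hab : a ≠ b) (hac : a ≠ c) (hbc : b ≠ c)
    (h1 : ({a, b} : Finset V) ∈ E) (h2 : ({a, c} : Finset V) ∈ E)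
    (h3 : ({b, c} : Finset V) ∈ E) :
    ({a, b, c} : Finset V) ∈ triangleFinset E := by
  rw [mem_triangleFinset]
  refine ⟨?_, ?_⟩
  · rw [Finset.card_insert_of_notMem (by simp [hab, hac]),
      Finset.card_insert_of_notMem (by simp [hbc]), Finset.card_singleton]
  · intro e hsub hc
    rcases pair_subset_triple hsub hc with rfl | rfl | rfl <;> assumption

lemma shift_key {E : Finset (Finset V)} {i j : V} (hij : i ≠ j)
    {t : Finset V} (ht : t ∈ triangleFinset E)
    (ht' : t ∉ triangleFinset (shiftGraph E i j)) :
    j ∈ t ∧ i ∉ t ∧ insert i (t.erase j) ∈ triangleFinset (shiftGraph E i j) ∧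
      insert i (t.erase j) ∉ triangleFinset E := by
  rw [mem_triangleFinset] at ht
  obtain ⟨hcard, hpairs⟩ := ht
  have hj : j ∈ t := by
    by_contra hj
    apply ht'
    rw [mem_triangleFinset]
    refine ⟨hcard, fun e hsub hc => ?_⟩
    exact mem_shift_of_not_moved _ _ _ (hpairs e hsub hc) (fun h => hj (hsub h.1))
  have hi : i ∉ t := by
    intro hi
    apply ht'
    rw [mem_triangleFinset]
    refine ⟨hcard, fun e hsub hc => ?_⟩
    have heE := hpairs e hsub hc
    by_cases hie : i ∈ e
    · exact mem_shift_of_not_moved _ _ _ heE (fun h => h.2.1 hie)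
    · refine mem_shift_of_not_moved _ _ _ heE ?_
      rintro ⟨hje, -, hnot⟩
      refine hnot (hpairs _ ?_ ?_)
      · intro x hx
        rcases Finset.mem_insert.1 hx with rfl | hx
        · exact hi
        · exact hsub (Finset.mem_of_mem_erase hx)
      · rw [Finset.card_insert_of_notMem (fun h => hie (Finset.mem_of_mem_erase h)),
          Finset.card_erase_of_mem hje, hc]
  have hs : (t.erase j).card = 2 := by
    rw [Finset.card_erase_of_mem hj, hcard]
  obtain ⟨a, b, hab, hsab⟩ := Finset.card_eq_two.1 hs
  have ha' : a ∈ t.erase j := by rw [hsab]; simp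
  have hb' : b ∈ t.erase j := by rw [hsab]; simp
  have hja : j ≠ a := by rintro rfl; exact Finset.notMem_erase _ t ha'
  have hjb : j ≠ b := by rintro rfl; exact Finset.notMem_erase _ t hb'
  have hia : i ≠ a := by rintro rfl; exact hi (Finset.mem_of_mem_erase ha')
  have hib : i ≠ b := by rintro rfl; exact hi (Finset.mem_of_mem_erase hb')
  have ht_eq : t = ({j, a, b} : Finset V) := by
    rw [← hsab, Finset.insert_erase hj]
  have hsubja : ({j, a} : Finset V) ⊆ t :=
    Finset.insert_subset hj (Finset.singleton_subset_iff.2 (Finset.mem_of_mem_erase ha'))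
  have hsubjb : ({j, b} : Finset V) ⊆ t :=
    Finset.insert_subset hj (Finset.singleton_subset_iff.2 (Finset.mem_of_mem_erase hb'))
  have hsubab : ({a, b} : Finset V) ⊆ t :=
    Finset.insert_subset (Finset.mem_of_mem_erase ha')
      (Finset.singleton_subset_iff.2 (Finset.mem_of_mem_erase hb'))
  have hpja : ({j, a} : Finset V) ∈ E := hpairs _ hsubja (Finset.card_pair hja)
  have hpjb : ({j, b} : Finset V) ∈ E := hpairs _ hsubjb (Finset.card_pair hjb)
  have hpab : ({a, b} : Finset V) ∈ E := hpairs _ hsubab (Finset.card_pair hab)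
  have hab' : ({a, b} : Finset V) ∈ shiftGraph E i j := by
    refine mem_shift_of_not_moved _ _ _ hpab ?_
    rintro ⟨h, -, -⟩
    simp only [Finset.mem_insert, Finset.mem_singleton] at h
    rcases h with rfl | rfl
    exacts [hja rfl, hjb rfl]
  have e1 : ({j, a} : Finset V).erase j = {a} :=
    Finset.erase_insert (by simp [hja])
  have e2 : ({j, b} : Finset V).erase j = {b} :=
    Finset.erase_insert (by simp [hjb])
  have hia' : ({i, a} : Finset V) ∈ shiftGraph E i j := by
    by_cases hmv : ({i, a} : Finset V) ∈ E
    · exact mem_shift_of_not_moved _ _ _ hmv (fun h => h.2.1 (Finset.mem_insert_self _ _))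
    · have := mem_shift_of_moved E i j hpja
        ⟨Finset.mem_insert_self _ _, by simp [hij, hia], by rw [e1]; exact hmv⟩
      rwa [e1] at this
  have hib' : ({i, b} : Finset V) ∈ shiftGraph E i j := by
    by_cases hmv : ({i, b} : Finset V) ∈ E
    · exact mem_shift_of_not_moved _ _ _ hmv (fun h => h.2.1 (Finset.mem_insert_self _ _))
    · have := mem_shift_of_moved E i j hpjb
        ⟨Finset.mem_insert_self _ _, by simp [hij, hib], by rw [e2]; exact hmv⟩
      rwa [e2] at this
  have hbad : ({i, a} : Finset V) ∉ E ∨ ({i, b} : Finset V) ∉ E := by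
    by_contra hcon
    push_neg at hcon
    apply ht'
    rw [mem_triangleFinset]
    refine ⟨hcard, fun e hsub hc => ?_⟩
    rcases pair_subset_triple (ht_eq ▸ hsub) hc with rfl | rfl | rfl
    · exact mem_shift_of_not_moved _ _ _ hpja (fun h => h.2.2 (by rw [e1]; exact hcon.1))
    · exact mem_shift_of_not_moved _ _ _ hpjb (fun h => h.2.2 (by rw [e2]; exact hcon.2))
    · exact hab'
  have hterase : insert i (t.erase j) = ({i, a, b} : Finset V) := by rw [hsab]
  refine ⟨hj, hi, ?_, ?_⟩
  · rw [hterase]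
    exact triple_mem_triangleFinset hia hib hab hia' hib' hab'
  · rw [hterase, mem_triangleFinset]
    rintro ⟨-, hp⟩
    rcases hbad with h | h
    · exact h (hp _ (Finset.insert_subset (Finset.mem_insert_self _ _)
        (Finset.singleton_subset_iff.2 (by simp))) (Finset.card_pair hia))
    · exact h (hp _ (Finset.insert_subset (Finset.mem_insert_self _ _)
        (Finset.singleton_subset_iff.2 (by simp))) (Finset.card_pair hib))

end Aux

/-- Shifting does not decrease the number of triangles:
`#T(G) ≤ #T(S_{i,j}(G))`. -/
theorem shift_triangles_le {V : Type*} [Fintype V] [DecidableEq V]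
    (E : Finset (Finset V)) (hE : ∀ e ∈ E, e.card = 2) (i j : V) (hij : i ≠ j) :
    (triangleFinset E).card ≤ (triangleFinset (shiftGraph E i j)).card := by
  apply Finset.card_le_card_of_injOn
    (fun t => if t ∈ triangleFinset (shiftGraph E i j) then t else insert i (t.erase j))
  · intro t ht
    dsimp only
    split_ifs with h
    · exact h
    · exact (shift_key hij ht h).2.2.1
  · intro t1 h1 t2 h2 heq
    dsimp only at heq
    split_ifs at heq with k1 k2 k2
    · exact heq
    · exfalso
      rw [heq] at h1
      exact (shift_key hij h2 k2).2.2.2 h1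
    · exfalso
      rw [← heq] at h2
      exact (shift_key hij h1 k1).2.2.2 h2
    · obtain ⟨hj1, hi1, -, -⟩ := shift_key hij h1 k1
      obtain ⟨hj2, hi2, -, -⟩ := shift_key hij h2 k2
      have hi1' : i ∉ t1.erase j := fun h => hi1 (Finset.mem_of_mem_erase h)
      have hi2' : i ∉ t2.erase j := fun h => hi2 (Finset.mem_of_mem_erase h)
      have he : t1.erase j = t2.erase j := by
        have := congrArg (fun s => Finset.erase s i) heq
        simpa [Finset.erase_insert hi1', Finset.erase_insert hi2'] using this
      rw [← Finset.insert_erase hj1, ← Finset.insert_erase hj2, he]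
end

section
/- Let G be a simple graph containing a clique on vertices {v_1,...,v_p}, and let u, v be two non-adjacent vertices outside this clique with N(u) ⊆ {v_1,...,v_p}, N(v) ⊆ {v_1,...,v_p}, and deg(u) ≤ deg(v). Let G' be obtained from G by deleting k edges incident to u and adding k new edges from v to vertices in {v_1,...,v_p} not already adjacent to v, where k ≤ min(deg(u), p − deg(v)). Then the number of triangles in G' minus the number of triangles in G equals (deg(v) − deg(u))·k + k², which is nonnegative; in particular G' has at least as many triangles as G. -/
set_option linter.unusedSectionVars false

section AuxLemmas
variable {V : Type*} [Fintype V] [DecidableEq V]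

theorem aux_choose_two_add (n k : ℕ) :
    (n + k).choose 2 = n.choose 2 + n * k + k.choose 2 := by
  induction k with
  | zero => simp
  | succ k ih =>
    have h1 : (n + (k+1)) = (n + k) + 1 := by ring
    have h2 : ((n+k)+1).choose 2 = (n+k).choose 1 + (n+k).choose 2 := Nat.choose_succ_succ _ _
    have h3 : (k+1).choose 2 = k.choose 1 + k.choose 2 := Nat.choose_succ_succ _ _
    simp only [Nat.choose_one_right] at h2 h3
    rw [h1, h2, h3, ih]
    ring

theorem aux_count_arith (a k m T : ℕ) :
    a.choose 2 + (a + k + m + k).choose 2 + T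
      = ((a + k).choose 2 + (a + k + m).choose 2 + T) + m * k + k ^ 2 := by
  rw [aux_choose_two_add (a+k+m) k, aux_choose_two_add a k, aux_choose_two_add (a+k) m]
  ring

theorem aux_final_arith (du dv k T : ℕ) (h1 : k ≤ du) (h2 : du ≤ dv) :
    (du - k).choose 2 + (dv + k).choose 2 + T
      = (du.choose 2 + dv.choose 2 + T) + (dv - du) * k + k ^ 2 := by
  obtain ⟨a, rfl⟩ : ∃ a, du = a + k := ⟨du - k, by omega⟩
  obtain ⟨m, rfl⟩ : ∃ m, dv = a + k + m := ⟨dv - (a + k), by omega⟩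
  have e1 : a + k - k = a := by omega
  have e2 : a + k + m - (a + k) = m := by omega
  rw [e1, e2]
  exact aux_count_arith a k m T

theorem aux_pair_card {x w : V} (h : x ≠ w) : ({x, w} : Finset V).card = 2 := by
  rw [Finset.card_insert_of_notMem (by simp [h]), Finset.card_singleton]

theorem aux_edge_eq_pair (F : Finset (Finset V)) (hF : ∀ e ∈ F, e.card = 2)
    {e : Finset V} (he : e ∈ F) {x : V} (hx : x ∈ e) :
    ∃ w, w ≠ x ∧ e = {x, w} := by
  obtain ⟨a, b, hab, rfl⟩ := Finset.card_eq_two.mp (hF e he)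
  rcases Finset.mem_insert.mp hx with rfl | hb
  · exact ⟨b, hab.symm, rfl⟩
  · rcases Finset.mem_singleton.mp hb with rfl
    exact ⟨a, hab, by rw [Finset.pair_comm]⟩

theorem aux_tri_count_vertex (F : Finset (Finset V)) (hF : ∀ e ∈ F, e.card = 2)
    (C : Finset V) (hC : ∀ a ∈ C, ∀ b ∈ C, a ≠ b → ({a, b} : Finset V) ∈ F)
    (x : V) (hx : x ∉ C)
    (hNx : ∀ e ∈ F, x ∈ e → ∀ w ∈ e, w ≠ x → w ∈ C) :
    ((triangleFinset F).filter (fun t => x ∈ t)).card = (degE F x).choose 2 := by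
  classical
  set N : Finset V := C.filter (fun w => ({x, w} : Finset V) ∈ F) with hN
  have hNsubC : N ⊆ C := Finset.filter_subset _ _
  have hxN : x ∉ N := fun h => hx (hNsubC h)
  have hA : degE F x = N.card := by
    have himg : F.filter (fun e => x ∈ e) = N.image (fun w => ({x, w} : Finset V)) := by
      ext e
      simp only [Finset.mem_filter, Finset.mem_image]
      constructor
      · rintro ⟨heF, hxe⟩
        obtain ⟨w, hwx, rfl⟩ := aux_edge_eq_pair F hF heF hxe
        refine ⟨w, ?_, rfl⟩
        rw [hN, Finset.mem_filter]
        exact ⟨hNx _ heF hxe w (by simp) hwx, heF⟩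
      · rintro ⟨w, hwN, rfl⟩
        rw [hN, Finset.mem_filter] at hwN
        exact ⟨hwN.2, by simp⟩
    have hinj : Set.InjOn (fun w => ({x, w} : Finset V)) N := by
      intro a ha b hb hab
      simp only at hab
      have : a ∈ ({x, b} : Finset V) := hab ▸ (by simp : a ∈ ({x, a} : Finset V))
      rcases Finset.mem_insert.mp this with rfl | h
      · exact absurd ha hxN
      · exact Finset.mem_singleton.mp h
    rw [degE, himg, Finset.card_image_of_injOn hinj]
  have hB : (triangleFinset F).filter (fun t => x ∈ t)
      = (N.powersetCard 2).image (fun s => insert x s) := by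
    ext t
    simp only [Finset.mem_filter, Finset.mem_image, triangleFinset,
      Finset.mem_powersetCard]
    constructor
    · rintro ⟨⟨ht3, hedges⟩, hxt⟩
      refine ⟨t.erase x, ⟨?_, ?_⟩, Finset.insert_erase hxt⟩
      · intro w hw
        have hwt : w ∈ t := Finset.mem_of_mem_erase hw
        have hwx : w ≠ x := Finset.ne_of_mem_erase hw
        have hpair : ({x, w} : Finset V) ∈ F :=
          hedges _ ⟨Finset.insert_subset hxt (Finset.singleton_subset_iff.mpr hwt),
            aux_pair_card (Ne.symm hwx)⟩
        rw [hN, Finset.mem_filter]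
        exact ⟨hNx _ hpair (by simp) w (by simp) hwx, hpair⟩
      · have := ht3.2
        rw [Finset.card_erase_of_mem hxt, this]
    · rintro ⟨s, ⟨hsN, hs2⟩, rfl⟩
      have hxs : x ∉ s := fun h => hxN (hsN h)
      have hcard : (insert x s).card = 3 := by
        rw [Finset.card_insert_of_notMem hxs, hs2]
      refine ⟨⟨⟨by simp, hcard⟩, ?_⟩, by simp⟩
      intro e he
      obtain ⟨hes, he2⟩ := he
      by_cases hxe : x ∈ e
      · have h1 : e.erase x ⊆ s := by
          intro w hw
          have := hes (Finset.mem_of_mem_erase hw)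
          rcases Finset.mem_insert.mp this with rfl | h
          · exact absurd rfl (Finset.ne_of_mem_erase hw)
          · exact h
        have h1c : (e.erase x).card = 1 := by
          rw [Finset.card_erase_of_mem hxe, he2]
        obtain ⟨w, hw⟩ := Finset.card_eq_one.mp h1c
        have hws : w ∈ s := h1 (hw ▸ Finset.mem_singleton_self w)
        have : e = {x, w} := by
          rw [← Finset.insert_erase hxe, hw]
        rw [this]
        exact (Finset.mem_filter.mp (hsN hws)).2
      · have hsub : e ⊆ s := by
          intro w hw
          rcases Finset.mem_insert.mp (hes hw) with rfl | h
          · exact absurd hw hxe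
          · exact h
        have : e = s := Finset.eq_of_subset_of_card_le hsub (by omega)
        subst this
        obtain ⟨a, b, hab, hs⟩ := Finset.card_eq_two.mp he2
        subst hs
        have haN := hsN (by simp : a ∈ ({a,b}:Finset V))
        have hbN := hsN (by simp : b ∈ ({a,b}:Finset V))
        exact hC a (hNsubC haN) b (hNsubC hbN) hab
  rw [hB, hA]
  rw [Finset.card_image_of_injOn, Finset.card_powersetCard]
  intro s hs s' hs' hss
  rw [Finset.mem_coe, Finset.mem_powersetCard] at hs hs'
  have hxs : x ∉ s := fun h => hxN (hs.1 h)
  have hxs' : x ∉ s' := fun h => hxN (hs'.1 h)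
  simp only at hss
  rw [← Finset.erase_insert hxs, ← Finset.erase_insert hxs', hss]

theorem aux_tri_split (F : Finset (Finset V)) (u v : V) (huv : u ≠ v)
    (hnadj : ({u, v} : Finset V) ∉ F) :
    (triangleFinset F).card
      = ((triangleFinset F).filter (fun t => u ∈ t)).card
        + ((triangleFinset F).filter (fun t => v ∈ t)).card
        + ((triangleFinset F).filter (fun t => u ∉ t ∧ v ∉ t)).card := by
  classical
  set T := triangleFinset F with hT
  have hno : ∀ t ∈ T, u ∈ t → v ∉ t := by
    intro t ht hut hvt
    rw [hT, triangleFinset, Finset.mem_filter] at ht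
    exact hnadj (ht.2 _ (Finset.mem_powersetCard.mpr
      ⟨Finset.insert_subset hut (Finset.singleton_subset_iff.mpr hvt),
        by rw [Finset.card_insert_of_notMem (by simp [huv]), Finset.card_singleton]⟩))
  have h1 : (T.filter (fun t => u ∈ t)).card + (T.filter (fun t => ¬ u ∈ t)).card = T.card :=
    Finset.card_filter_add_card_filter_not _
  have h2 : ((T.filter (fun t => ¬ u ∈ t)).filter (fun t => v ∈ t)).card
      + ((T.filter (fun t => ¬ u ∈ t)).filter (fun t => ¬ v ∈ t)).card
      = (T.filter (fun t => ¬ u ∈ t)).card :=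
    Finset.card_filter_add_card_filter_not _
  have h3 : (T.filter (fun t => ¬ u ∈ t)).filter (fun t => v ∈ t)
      = T.filter (fun t => v ∈ t) := by
    rw [Finset.filter_filter]
    apply Finset.filter_congr
    intro t ht
    constructor
    · exact fun h => h.2
    · exact fun h => ⟨fun hu' => hno t ht hu' h, h⟩
  have h4 : (T.filter (fun t => ¬ u ∈ t)).filter (fun t => ¬ v ∈ t)
      = T.filter (fun t => u ∉ t ∧ v ∉ t) := by
    rw [Finset.filter_filter]
  rw [h3, h4] at h2
  omega

theorem aux_tri_avoid_eq (E F : Finset (Finset V)) (u v : V)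
    (h : ∀ e : Finset V, u ∉ e → v ∉ e → (e ∈ E ↔ e ∈ F)) :
    (triangleFinset E).filter (fun t => u ∉ t ∧ v ∉ t)
      = (triangleFinset F).filter (fun t => u ∉ t ∧ v ∉ t) := by
  ext t
  simp only [triangleFinset, Finset.mem_filter, Finset.mem_powersetCard]
  constructor
  · rintro ⟨⟨h3, hedg⟩, hut, hvt⟩
    refine ⟨⟨h3, fun e he => ?_⟩, hut, hvt⟩
    exact (h e (fun hc => hut (he.1 hc)) (fun hc => hvt (he.1 hc))).mp (hedg e he)
  · rintro ⟨⟨h3, hedg⟩, hut, hvt⟩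
    refine ⟨⟨h3, fun e he => ?_⟩, hut, hvt⟩
    exact (h e (fun hc => hut (he.1 hc)) (fun hc => hvt (he.1 hc))).mpr (hedg e he)

end AuxLemmas

/-- Moving `k` edges from a vertex `u` to a non-adjacent vertex `v`, where both vertices
have all their neighbors inside a clique `C` and `deg u ≤ deg v`, changes the number of
triangles by exactly `(deg v − deg u)·k + k²`; in particular it does not decrease the
number of triangles. -/
theorem move_edges_triangles {V : Type*} [Fintype V] [DecidableEq V]
    (E : Finset (Finset V)) (hE : ∀ e ∈ E, e.card = 2)
    (C : Finset V) (hC : ∀ a ∈ C, ∀ b ∈ C, a ≠ b → ({a, b} : Finset V) ∈ E)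
    (u v : V) (hu : u ∉ C) (hv : v ∉ C) (huv : u ≠ v)
    (hnadj : ({u, v} : Finset V) ∉ E)
    (hNu : ∀ e ∈ E, u ∈ e → ∀ w ∈ e, w ≠ u → w ∈ C)
    (hNv : ∀ e ∈ E, v ∈ e → ∀ w ∈ e, w ≠ v → w ∈ C)
    (hdeg : degE E u ≤ degE E v)
    (k : ℕ) (hk : k ≤ min (degE E u) (C.card - degE E v))
    (D : Finset (Finset V)) (hD : D ⊆ E.filter fun e => u ∈ e) (hDcard : D.card = k)
    (A : Finset (Finset V)) (hA : ∀ e ∈ A, ∃ w ∈ C, e = ({v, w} : Finset V) ∧ e ∉ E)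
    (hAcard : A.card = k) :
    (triangleFinset ((E \ D) ∪ A)).card
        = (triangleFinset E).card + (degE E v - degE E u) * k + k ^ 2 ∧
    (triangleFinset E).card ≤ (triangleFinset ((E \ D) ∪ A)).card := by
  classical
  set E' := (E \ D) ∪ A with hE'def
  -- facts about A
  have hAmem : ∀ e ∈ A, v ∈ e ∧ u ∉ e ∧ e.card = 2 ∧ e ∉ E ∧
      (∀ w ∈ e, w ≠ v → w ∈ C) := by
    intro e he
    obtain ⟨w, hwC, rfl, heE⟩ := hA e he
    have hvw : v ≠ w := fun h => hv (h ▸ hwC)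
    refine ⟨by simp, ?_, aux_pair_card hvw, heE, ?_⟩
    · intro hue
      rcases Finset.mem_insert.mp hue with h | h
      · exact huv h
      · exact hu ((Finset.mem_singleton.mp h) ▸ hwC)
    · intro w' hw' hne
      rcases Finset.mem_insert.mp hw' with h | h
      · exact absurd h hne
      · exact (Finset.mem_singleton.mp h) ▸ hwC
  have hDmem : ∀ e ∈ D, e ∈ E ∧ u ∈ e := fun e he => Finset.mem_filter.mp (hD he)
  have hvD : ∀ e ∈ D, v ∉ e := by
    intro e he hve
    exact hv (hNu e (hDmem e he).1 (hDmem e he).2 v hve (Ne.symm huv))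
  -- facts about E'
  have hE'2 : ∀ e ∈ E', e.card = 2 := by
    intro e he
    rcases Finset.mem_union.mp he with h | h
    · exact hE e (Finset.mem_sdiff.mp h).1
    · exact (hAmem e h).2.2.1
  have hC' : ∀ a ∈ C, ∀ b ∈ C, a ≠ b → ({a, b} : Finset V) ∈ E' := by
    intro a ha b hb hab
    apply Finset.mem_union_left
    rw [Finset.mem_sdiff]
    refine ⟨hC a ha b hb hab, fun hcD => ?_⟩
    have hue := (hDmem _ hcD).2
    rcases Finset.mem_insert.mp hue with h | h
    · exact hu (h ▸ ha)
    · exact hu ((Finset.mem_singleton.mp h) ▸ hb)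
  have hnadj' : ({u, v} : Finset V) ∉ E' := by
    intro h
    rcases Finset.mem_union.mp h with h | h
    · exact hnadj (Finset.mem_sdiff.mp h).1
    · exact (hAmem _ h).2.1 (by simp)
  have hNu' : ∀ e ∈ E', u ∈ e → ∀ w ∈ e, w ≠ u → w ∈ C := by
    intro e he hue w hw hwu
    rcases Finset.mem_union.mp he with h | h
    · exact hNu e (Finset.mem_sdiff.mp h).1 hue w hw hwu
    · exact absurd hue (hAmem e h).2.1
  have hNv' : ∀ e ∈ E', v ∈ e → ∀ w ∈ e, w ≠ v → w ∈ C := by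
    intro e he hve w hw hwv
    rcases Finset.mem_union.mp he with h | h
    · exact hNv e (Finset.mem_sdiff.mp h).1 hve w hw hwv
    · exact (hAmem e h).2.2.2.2 w hw hwv
  -- degree computations
  have hkdu : k ≤ degE E u := le_trans hk (min_le_left _ _)
  have hdu' : degE E' u = degE E u - k := by
    have hfe : E'.filter (fun e => u ∈ e) = (E.filter (fun e => u ∈ e)) \ D := by
      ext e
      simp only [Finset.mem_filter, Finset.mem_sdiff, hE'def, Finset.mem_union]
      constructor
      · rintro ⟨h | h, hue⟩
        · exact ⟨⟨h.1, hue⟩, h.2⟩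
        · exact absurd hue (hAmem e h).2.1
      · rintro ⟨⟨heE, hue⟩, heD⟩
        exact ⟨Or.inl ⟨heE, heD⟩, hue⟩
    rw [degE, hfe, Finset.card_sdiff_of_subset hD, hDcard, ← degE]
  have hdv' : degE E' v = degE E v + k := by
    have hfe : E'.filter (fun e => v ∈ e) = (E.filter (fun e => v ∈ e)) ∪ A := by
      ext e
      simp only [Finset.mem_filter, Finset.mem_union, hE'def, Finset.mem_sdiff]
      constructor
      · rintro ⟨h | h, hve⟩
        · exact Or.inl ⟨h.1, hve⟩
        · exact Or.inr h
      · rintro (⟨heE, hve⟩ | h)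
        · exact ⟨Or.inl ⟨heE, fun hcD => hvD e hcD hve⟩, hve⟩
        · exact ⟨Or.inr h, (hAmem e h).1⟩
    have hdisj : Disjoint (E.filter (fun e => v ∈ e)) A := by
      rw [Finset.disjoint_left]
      intro e he heA
      exact (hAmem e heA).2.2.2.1 (Finset.mem_filter.mp he).1
    rw [degE, hfe, Finset.card_union_of_disjoint hdisj, hAcard, ← degE]
  -- triangle counts
  have cu := aux_tri_count_vertex E hE C hC u hu hNu
  have cv := aux_tri_count_vertex E hE C hC v hv hNv
  have cu' := aux_tri_count_vertex E' hE'2 C hC' u hu hNu'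
  have cv' := aux_tri_count_vertex E' hE'2 C hC' v hv hNv'
  have s1 := aux_tri_split E u v huv hnadj
  have s2 := aux_tri_split E' u v huv hnadj'
  have havoid : (triangleFinset E').filter (fun t => u ∉ t ∧ v ∉ t)
      = (triangleFinset E).filter (fun t => u ∉ t ∧ v ∉ t) := by
    apply aux_tri_avoid_eq
    intro e hue hve
    constructor
    · intro h
      rcases Finset.mem_union.mp h with h | h
      · exact (Finset.mem_sdiff.mp h).1
      · exact absurd (hAmem e h).1 hve
    · intro h
      apply Finset.mem_union_left
      rw [Finset.mem_sdiff]
      exact ⟨h, fun hcD => hue (hDmem e hcD).2⟩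
  -- arithmetic conclusion
  have hmain : (triangleFinset E').card
      = (triangleFinset E).card + (degE E v - degE E u) * k + k ^ 2 := by
    rw [s2, s1, cu, cv, cu', cv', hdu', hdv', havoid]
    exact aux_final_arith _ _ _ _ hkdu hdeg
  exact ⟨hmain, by omega⟩
end
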